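/- Under overlap, for any integrable real random variable Z, odds-of-propensity-score reweighting of the control group recovers the control-group conditional mean of Z averaged over the covariate distribution of group g: E[(p_g(X) C / (1 − p_g(X))) Z] / E[p_g(X) C / (1 − p_g(X))] = E[m(X) | G_g = 1], where m(X) is any version of E[Z | X, C = 1]. -/

import Mathlib

/-!
Let `S = A ∪ B` be the union of the treated group `A = {G = 1}` and the control group
`B = {C = 1}`. On `S` the propensity score `p` is the conditional probability of `A` given `X`,
so `1 - p` is that of `B`, and pulling `X`-measurable factors out of conditional expectations
gives `∫_A f = ∫_S f p` and `∫_B f = ∫_S f (1 - p)` for `X`-measurable `f`. Taking `f` times the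
odds `p / (1 - p)` in the second identity turns it into the first:
`∫_B (p / (1 - p)) f = ∫_A f`. With `f = m(X)` (after replacing `Z` by `m(X)` on `B`) this is
the numerator of the claim, with `f = 1` the denominator `P(A)`. Overlap keeps the odds bounded
and makes `m(X)`, known to be integrable on `B`, integrable on all of `S`.
-/

open MeasureTheory ProbabilityTheory

section CondIntegral

variable {Ω E : Type*} [MeasurableSpace Ω] {μ : Measure Ω} {s : Set Ω} [NormedAddCommGroup E]

lemma integrable_cond_iff_integrableOn [IsFiniteMeasure μ] {f : Ω → E} :
    Integrable f μ[|s] ↔ IntegrableOn f s μ := by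
  rcases eq_or_ne (μ s) 0 with hs | hs
  · simp [cond_eq_zero_of_meas_eq_zero hs, IntegrableOn, Measure.restrict_eq_zero.2 hs]
  · rw [ProbabilityTheory.cond,
      integrable_smul_measure (by simp [measure_ne_top]) (by simpa using hs)]
    rfl

variable [NormedSpace ℝ E]

lemma integral_cond_eq_inv_smul_setIntegral (f : Ω → E) :
    ∫ x, f x ∂μ[|s] = (μ.real s)⁻¹ • ∫ x in s, f x ∂μ := by
  rw [ProbabilityTheory.cond, integral_smul_measure, ENNReal.toReal_inv, measureReal_def]

lemma setIntegral_eq_measureReal_smul_integral_cond [IsFiniteMeasure μ] (f : Ω → E) :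
    ∫ x in s, f x ∂μ = μ.real s • ∫ x, f x ∂μ[|s] := by
  rcases eq_or_ne (μ s) 0 with hs | hs
  · simp [Measure.restrict_eq_zero.2 hs, measureReal_def, hs]
  · rw [integral_cond_eq_inv_smul_setIntegral, smul_smul,
      mul_inv_cancel₀ ((measureReal_ne_zero_iff).2 hs), one_smul]

end CondIntegral

section PullOut

variable {Ω : Type*} {m m0 : MeasurableSpace Ω} {μ : Measure Ω} {s t : Set Ω} {f g h : Ω → ℝ}

lemma condExp_cond_mul_ae_eq [IsFiniteMeasure μ] (hf : StronglyMeasurable[m] f)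
    (hfg : IntegrableOn (f * g) s μ) (hg : IntegrableOn g s μ) (hh : h =ᵐ[μ[|s]] μ[|s][g|m]) :
    μ[|s][f * g|m] =ᵐ[μ[|s]] f * h := by
  refine (condExp_mul_of_stronglyMeasurable_left hf (integrable_cond_iff_integrableOn.2 hfg)
    (integrable_cond_iff_integrableOn.2 hg)).trans ?_
  filter_upwards [hh] with x hx
  simp [hx]

lemma IntegrableOn.mul_of_ae_eq_condExp_cond [IsFiniteMeasure μ] (hf : StronglyMeasurable[m] f)
    (hfg : IntegrableOn (f * g) s μ) (hg : IntegrableOn g s μ) (hh : h =ᵐ[μ[|s]] μ[|s][g|m]) :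
    IntegrableOn (f * h) s μ :=
  integrable_cond_iff_integrableOn.1 <|
    integrable_condExp.congr (condExp_cond_mul_ae_eq hf hfg hg hh)

lemma setIntegral_mul_eq_of_ae_eq_condExp_cond [IsFiniteMeasure μ] (hm : m ≤ m0)
    (hf : StronglyMeasurable[m] f) (hfg : IntegrableOn (f * g) s μ) (hg : IntegrableOn g s μ)
    (hh : h =ᵐ[μ[|s]] μ[|s][g|m]) :
    ∫ x in s, f x * g x ∂μ = ∫ x in s, f x * h x ∂μ := by
  simp only [setIntegral_eq_measureReal_smul_integral_cond (s := s)]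
  congr 1
  calc ∫ x, (f * g) x ∂μ[|s] = ∫ x, μ[|s][f * g|m] x ∂μ[|s] := (integral_condExp hm).symm
    _ = ∫ x, (f * h) x ∂μ[|s] := integral_congr_ae (condExp_cond_mul_ae_eq hf hfg hg hh)

lemma integrableOn_mul_indicator_one (ht : MeasurableSet t) (hts : t ⊆ s)
    (hft : IntegrableOn f t μ) : IntegrableOn (f * t.indicator 1) s μ := by
  have : f * t.indicator 1 = t.indicator f := by ext x; by_cases hx : x ∈ t <;> simp [hx]
  rwa [this, IntegrableOn, integrable_indicator_iff ht, IntegrableOn,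
    Measure.restrict_restrict ht, Set.inter_eq_self_of_subset_left hts]

lemma setIntegral_eq_setIntegral_mul_of_ae_eq_condExp_indicator [IsFiniteMeasure μ] (hm : m ≤ m0)
    (ht : MeasurableSet t) (hts : t ⊆ s) (hf : StronglyMeasurable[m] f)
    (hft : IntegrableOn f t μ) (hh : h =ᵐ[μ[|s]] μ[|s][t.indicator 1|m]) :
    ∫ x in t, f x ∂μ = ∫ x in s, f x * h x ∂μ := by
  have hind : IntegrableOn (t.indicator (1 : Ω → ℝ)) s μ :=
    ((integrable_const 1).indicator ht).integrableOn
  calc ∫ x in t, f x ∂μ = ∫ x in s, t.indicator f x ∂μ := by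
        rw [setIntegral_indicator ht, Set.inter_eq_self_of_subset_right hts]
    _ = ∫ x in s, f x * t.indicator 1 x ∂μ := by
        congr 1; ext x; by_cases hx : x ∈ t <;> simp [hx]
    _ = ∫ x in s, f x * h x ∂μ :=
        setIntegral_mul_eq_of_ae_eq_condExp_cond hm hf
          (integrableOn_mul_indicator_one ht hts hft) hind hh

lemma IntegrableOn.of_condExp_indicator_ge [IsFiniteMeasure μ] (hm : m ≤ m0)
    (ht : MeasurableSet t) (hts : t ⊆ s)
    (hf : StronglyMeasurable[m] f) (hft : IntegrableOn f t μ)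
    (hh : h =ᵐ[μ[|s]] μ[|s][t.indicator 1|m]) {ε : ℝ} (hε : 0 < ε)
    (hεh : ∀ᵐ x ∂μ.restrict s, ε ≤ h x) : IntegrableOn f s μ := by
  have hfh : IntegrableOn (f * h) s μ :=
    IntegrableOn.mul_of_ae_eq_condExp_cond hf (integrableOn_mul_indicator_one ht hts hft)
      ((integrable_const 1).indicator ht).integrableOn hh
  refine (hfh.norm.const_mul ε⁻¹).mono' (hf.mono hm).aestronglyMeasurable ?_
  filter_upwards [hεh] with x hx
  rw [le_inv_mul_iff₀ hε, Pi.mul_apply, norm_mul, mul_comm ε]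
  exact mul_le_mul_of_nonneg_left (hx.trans (Real.le_norm_self _)) (norm_nonneg _)

end PullOut

section Propensity

variable {Ω : Type*} {m m0 : MeasurableSpace Ω} {μ : Measure Ω} {A B : Set Ω} {p : Ω → ℝ} {ε : ℝ}

lemma one_sub_ae_eq_condExp_indicator_of_disjoint (hm : m ≤ m0) (hA : MeasurableSet A)
    (hB : MeasurableSet B) (hAB : Disjoint A B)
    (hp : p =ᵐ[μ[|A ∪ B]] μ[|A ∪ B][A.indicator 1|m]) :
    1 - p =ᵐ[μ[|A ∪ B]] μ[|A ∪ B][B.indicator 1|m] := by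
  have hBA : B.indicator (1 : Ω → ℝ) =ᵐ[μ[|A ∪ B]] 1 - A.indicator 1 := by
    filter_upwards [ae_cond_mem (hA.union hB)] with x hx
    have := congrFun (Set.indicator_union_of_disjoint hAB (1 : Ω → ℝ)) x
    simp only [Set.indicator_of_mem hx] at this
    simp only [Pi.sub_apply, this]
    ring
  refine Filter.EventuallyEq.symm ((condExp_congr_ae hBA).trans ?_)
  refine (condExp_sub (integrable_const 1) ((integrable_const 1).indicator hA) m).trans ?_
  filter_upwards [hp] with x hx
  simp [condExp_const hm, hx]

lemma norm_div_one_sub_le_inv {a : ℝ} (hε : 0 < ε) (ha₀ : 0 ≤ a) (ha₁ : a ≤ 1 - ε) :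
    ‖a / (1 - a)‖ ≤ ε⁻¹ := by
  rw [Real.norm_of_nonneg (div_nonneg ha₀ (by linarith)), div_le_iff₀ (by linarith),
    le_inv_mul_iff₀ hε]
  nlinarith

lemma setIntegral_odds_mul_eq_setIntegral [IsFiniteMeasure μ] (hm : m ≤ m0)
    (hA : MeasurableSet A) (hB : MeasurableSet B) (hAB : Disjoint A B) (hpm : Measurable[m] p)
    (hp : p =ᵐ[μ[|A ∪ B]] μ[|A ∪ B][A.indicator 1|m]) (hε : 0 < ε)
    (hoverlap : ∀ᵐ x ∂μ, 0 ≤ p x ∧ p x ≤ 1 - ε) {f : Ω → ℝ} (hf : Measurable[m] f)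
    (hfs : IntegrableOn f (A ∪ B) μ) :
    ∫ x in B, p x / (1 - p x) * f x ∂μ = ∫ x in A, f x ∂μ := by
  have hodds : Measurable[m] fun x => p x / (1 - p x) := hpm.div (measurable_const.sub hpm)
  have hoddsf : IntegrableOn (fun x => p x / (1 - p x) * f x) B μ :=
    (hfs.mono_set Set.subset_union_right).bdd_mul (hodds.mono hm le_rfl).aestronglyMeasurable
      (ae_restrict_of_ae (hoverlap.mono fun x hx => norm_div_one_sub_le_inv hε hx.1 hx.2))
  calc ∫ x in B, p x / (1 - p x) * f x ∂μ
      = ∫ x in A ∪ B, p x / (1 - p x) * f x * (1 - p) x ∂μ :=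
        setIntegral_eq_setIntegral_mul_of_ae_eq_condExp_indicator hm hB Set.subset_union_right
          (hodds.mul hf).stronglyMeasurable hoddsf
          (one_sub_ae_eq_condExp_indicator_of_disjoint hm hA hB hAB hp)
    _ = ∫ x in A ∪ B, f x * p x ∂μ := by
        refine setIntegral_congr_ae (hA.union hB) (hoverlap.mono fun x hx _ => ?_)
        have : 1 - p x ≠ 0 := by linarith [hx.2]
        simp only [Pi.sub_apply, Pi.one_apply]
        field_simp
    _ = ∫ x in A, f x ∂μ :=
        (setIntegral_eq_setIntegral_mul_of_ae_eq_condExp_indicator hm hA Set.subset_union_left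
          hf.stronglyMeasurable (hfs.mono_set Set.subset_union_left) hp).symm

lemma setIntegral_odds_mul_eq_setIntegral_condExp [IsFiniteMeasure μ] (hm : m ≤ m0)
    (hA : MeasurableSet A) (hB : MeasurableSet B) (hAB : Disjoint A B) (hpm : Measurable[m] p)
    (hp : p =ᵐ[μ[|A ∪ B]] μ[|A ∪ B][A.indicator 1|m]) (hε : 0 < ε)
    (hoverlap : ∀ᵐ x ∂μ, 0 ≤ p x ∧ p x ≤ 1 - ε) {Z g : Ω → ℝ} (hZ : IntegrableOn Z B μ)
    (hg : Measurable[m] g) (hgZ : g =ᵐ[μ[|B]] μ[|B][Z|m]) :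
    ∫ x in B, p x / (1 - p x) * Z x ∂μ = ∫ x in A, g x ∂μ := by
  have hodds : Measurable[m] fun x => p x / (1 - p x) := hpm.div (measurable_const.sub hpm)
  have hgB : IntegrableOn g B μ :=
    integrable_cond_iff_integrableOn.1 (integrable_condExp.congr hgZ.symm)
  have hgS : IntegrableOn g (A ∪ B) μ :=
    IntegrableOn.of_condExp_indicator_ge hm hB Set.subset_union_right hg.stronglyMeasurable hgB
      (one_sub_ae_eq_condExp_indicator_of_disjoint hm hA hB hAB hp) hε
      (ae_restrict_of_ae <| hoverlap.mono fun x hx => by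
        simp only [Pi.sub_apply, Pi.one_apply]
        linarith [hx.2])
  calc ∫ x in B, p x / (1 - p x) * Z x ∂μ = ∫ x in B, p x / (1 - p x) * g x ∂μ :=
        setIntegral_mul_eq_of_ae_eq_condExp_cond hm hodds.stronglyMeasurable
          (hZ.bdd_mul (hodds.mono hm le_rfl).aestronglyMeasurable (ae_restrict_of_ae
            (hoverlap.mono fun x hx => norm_div_one_sub_le_inv hε hx.1 hx.2))) hZ hgZ
    _ = ∫ x in A, g x ∂μ :=
        setIntegral_odds_mul_eq_setIntegral hm hA hB hAB hpm hp hε hoverlap hg hgS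

end Propensity

section IndicatorVariables

variable {Ω : Type*} {G C : Ω → ℝ}

lemma eq_indicator_setOf_eq_one (hG : ∀ ω, G ω = 0 ∨ G ω = 1) :
    G = {ω | G ω = 1}.indicator 1 := by
  ext ω
  rcases hG ω with h | h <;> simp [h]

lemma setOf_add_eq_one_eq_union (hG : ∀ ω, G ω = 0 ∨ G ω = 1) (hC : ∀ ω, C ω = 0 ∨ C ω = 1)
    (hGC : ∀ ω, G ω + C ω ≤ 1) :
    {ω | G ω + C ω = 1} = {ω | G ω = 1} ∪ {ω | C ω = 1} := by
  ext ω
  have := hGC ω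
  rcases hG ω with h | h <;> rcases hC ω with h' | h' <;> simp [h, h'] at this ⊢
  norm_num at this

lemma disjoint_setOf_eq_one_of_add_le_one (hGC : ∀ ω, G ω + C ω ≤ 1) :
    Disjoint {ω | G ω = 1} {ω | C ω = 1} :=
  Set.disjoint_left.2 fun ω (hG : G ω = 1) (hC : C ω = 1) => by linarith [hGC ω]

end IndicatorVariables

theorem odds_reweighting_recovers_control_conditional_mean_general
    {Ω : Type*} [MeasurableSpace Ω] (P : Measure Ω) [IsProbabilityMeasure P]
    (k : ℕ) (X : Ω → (Fin k → ℝ)) (hXmeas : Measurable X)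
    (G C : Ω → ℝ) (hGmeas : Measurable G) (hCmeas : Measurable C)
    -- indicator structure
    (hG01 : ∀ ω, G ω = 0 ∨ G ω = 1) (hC01 : ∀ ω, C ω = 0 ∨ C ω = 1)
    (hGC : ∀ ω, G ω + C ω ≤ 1)
    -- the generalized propensity score: a σ(X)-measurable version of E[G | X, G + C = 1]
    (p : Ω → ℝ)
    (hpmeas : Measurable[MeasurableSpace.comap X inferInstance] p)
    (hpver : p =ᵐ[P[|{ω | G ω + C ω = 1}]]
      (P[|{ω | G ω + C ω = 1}])[G | MeasurableSpace.comap X inferInstance])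
    -- overlap
    (ε : ℝ) (hε : 0 < ε)
    (hoverlap : ∀ᵐ ω ∂P, 0 ≤ p ω ∧ p ω ≤ 1 - ε)
    -- an integrable random variable and a version m of E[Z | X, C = 1]
    (Z : Ω → ℝ) (hZint : Integrable Z P)
    (m : (Fin k → ℝ) → ℝ) (hmmeas : Measurable m)
    (hmver : (fun ω => m (X ω)) =ᵐ[P[|{ω | C ω = 1}]]
      (P[|{ω | C ω = 1}])[Z | MeasurableSpace.comap X inferInstance]) :
    (∫ ω, (p ω * C ω / (1 - p ω)) * Z ω ∂P) / (∫ ω, p ω * C ω / (1 - p ω) ∂P) =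
      ∫ ω, m (X ω) ∂(P[|{ω | G ω = 1}]) := by
  have hA : MeasurableSet {ω | G ω = 1} := hGmeas (measurableSet_singleton 1)
  have hB : MeasurableSet {ω | C ω = 1} := hCmeas (measurableSet_singleton 1)
  have hp : p =ᵐ[P[|{ω | G ω = 1} ∪ {ω | C ω = 1}]] P[|{ω | G ω = 1} ∪ {ω | C ω = 1}][
      {ω | G ω = 1}.indicator 1|MeasurableSpace.comap X inferInstance] := by
    rwa [← setOf_add_eq_one_eq_union hG01 hC01 hGC, ← eq_indicator_setOf_eq_one hG01]
  have key (Y g : Ω → ℝ) (hY : Integrable Y P)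
      (hg : Measurable[MeasurableSpace.comap X inferInstance] g)
      (hgY : g =ᵐ[P[|{ω | C ω = 1}]] P[|{ω | C ω = 1}][Y|MeasurableSpace.comap X inferInstance]) :
      ∫ ω, p ω * C ω / (1 - p ω) * Y ω ∂P = ∫ ω in {ω | G ω = 1}, g ω ∂P := by
    have hYB : (fun ω => p ω * C ω / (1 - p ω) * Y ω) =
        {ω | C ω = 1}.indicator fun ω => p ω / (1 - p ω) * Y ω := by
      ext ω
      rcases hC01 ω with h | h <;> simp [h]
    rw [hYB, integral_indicator hB]
    exact setIntegral_odds_mul_eq_setIntegral_condExp hXmeas.comap_le hA hB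
      (disjoint_setOf_eq_one_of_add_le_one hGC) hpmeas hp hε hoverlap hY.integrableOn hg hgY
  have hnum := key Z (fun ω => m (X ω)) hZint (hmmeas.comp (comap_measurable X)) hmver
  have hden := key 1 1 (integrable_const 1) measurable_const
    (Filter.EventuallyEq.of_eq (condExp_const hXmeas.comap_le (1 : ℝ)).symm)
  simp only [Pi.one_apply, mul_one, setIntegral_const, smul_eq_mul] at hden
  rw [hnum, hden, integral_cond_eq_inv_smul_setIntegral, smul_eq_mul, div_eq_inv_mul]

/-- odds-of-propensity-score reweighting of the control group.
Under overlap, for any integrable real random variable `Z`,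
`E[(p_g(X) C / (1 − p_g(X))) Z] / E[p_g(X) C / (1 − p_g(X))] = E[m(X) | G_g = 1]`,
where `m(X)` is any version of `E[Z | X, C = 1]`. -/
theorem odds_reweighting_recovers_control_conditional_mean
    {Ω : Type*} [MeasurableSpace Ω] (P : Measure Ω) [IsProbabilityMeasure P]
    (k : ℕ) (X : Ω → (Fin k → ℝ)) (hXmeas : Measurable X)
    (G C : Ω → ℝ) (hGmeas : Measurable G) (hCmeas : Measurable C)
    -- indicator structure
    (hG01 : ∀ ω, G ω = 0 ∨ G ω = 1) (hC01 : ∀ ω, C ω = 0 ∨ C ω = 1)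
    (hGC : ∀ ω, G ω + C ω ≤ 1)
    (hPg : 0 < P {ω | G ω = 1}) (hPC : 0 < P {ω | C ω = 1})
    -- the generalized propensity score: a σ(X)-measurable version of E[G | X, G + C = 1]
    (p : Ω → ℝ)
    (hpmeas : Measurable[MeasurableSpace.comap X inferInstance] p)
    (hpver : p =ᵐ[P[|{ω | G ω + C ω = 1}]]
      (P[|{ω | G ω + C ω = 1}])[G | MeasurableSpace.comap X inferInstance])
    -- overlap
    (ε : ℝ) (hε : 0 < ε)
    (hoverlap : ∀ᵐ ω ∂P, 0 ≤ p ω ∧ p ω ≤ 1 - ε)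
    -- an integrable random variable and a version m of E[Z | X, C = 1]
    (Z : Ω → ℝ) (hZmeas : Measurable Z) (hZint : Integrable Z P)
    (m : (Fin k → ℝ) → ℝ) (hmmeas : Measurable m)
    (hmver : (fun ω => m (X ω)) =ᵐ[P[|{ω | C ω = 1}]]
      (P[|{ω | C ω = 1}])[Z | MeasurableSpace.comap X inferInstance]) :
    (∫ ω, (p ω * C ω / (1 - p ω)) * Z ω ∂P) / (∫ ω, p ω * C ω / (1 - p ω) ∂P) =
      ∫ ω, m (X ω) ∂(P[|{ω | G ω = 1}]) :=
  odds_reweighting_recovers_control_conditional_mean_general P k X hXmeas G C hGmeas hCmeas hG01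
    hC01 hGC p hpmeas hpver ε hε hoverlap Z hZint m hmmeas hmver
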